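/- arXiv:0810.3952 — 9 statements merged into one kernel-verified Lean document; each statement's English description precedes it below -/
import Mathlib

section
/- In the fair merge model with two upstream links of capacities C1, C2 and downstream supply S3, the boundary fluxes q_i = min{D_i, max{S3 − D_j, (C_i/(C1+C2))·S3}} for {i,j} = {1,2} satisfy q1 + q2 = min{D1 + D2, S3}, provided 0 ≤ D_i ≤ C_i, 0 < S3 ≤ C1 + C2. -/
/-- Fair merge fluxes are flux-maximizing: `q1 + q2 = min (D1 + D2) S3`. -/
theorem fair_merge_total_flux
    (C1 C2 S3 D1 D2 : ℝ)
    (hC1 : 0 < C1) (hC2 : 0 < C2)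
    (hD1 : 0 ≤ D1) (hD2 : 0 ≤ D2)
    (hD1C : D1 ≤ C1) (hD2C : D2 ≤ C2)
    (hS3 : 0 < S3) (hS3C : S3 ≤ C1 + C2) :
    min D1 (max (S3 - D2) (C1 / (C1 + C2) * S3)) +
      min D2 (max (S3 - D1) (C2 / (C1 + C2) * S3)) = min (D1 + D2) S3 := by
  have hC : 0 < C1 + C2 := by linarith
  have hab : C1 / (C1 + C2) * S3 + C2 / (C1 + C2) * S3 = S3 := by
    field_simp
  have ha : 0 < C1 / (C1 + C2) * S3 := by positivity
  have hb : 0 < C2 / (C1 + C2) * S3 := by positivity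
  simp only [min_def, max_def]
  split_ifs <;> linarith
end

section
/- In the fair merge model, if D1 + D2 > S3 and D_i ≤ (C_i/(C1+C2))·S3 for some i (with j the other index), then q_i = D_i and q_j = S3 − D_i, where q_k = min{D_k, max{S3 − D_l, (C_k/(C1+C2))·S3}}. -/
/-- Fair merge: if `D1 + D2 > S3` and link 1's demand is below its share,
then `q1 = D1` and `q2 = S3 - D1`. -/
theorem fair_merge_one_congested
    (C1 C2 S3 D1 D2 : ℝ)
    (hC1 : 0 < C1) (hC2 : 0 < C2)
    (hD1 : 0 ≤ D1) (hD2 : 0 ≤ D2)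
    (hD1C : D1 ≤ C1) (hD2C : D2 ≤ C2)
    (hS3 : 0 ≤ S3) (hS3C : S3 ≤ C1 + C2)
    (h : S3 < D1 + D2) (hi : D1 ≤ C1 / (C1 + C2) * S3) :
    min D1 (max (S3 - D2) (C1 / (C1 + C2) * S3)) = D1 ∧
    min D2 (max (S3 - D1) (C2 / (C1 + C2) * S3)) = S3 - D1 := by
  have hC : 0 < C1 + C2 := by linarith
  have hsum : C1 / (C1 + C2) * S3 + C2 / (C1 + C2) * S3 = S3 := by
    field_simp
  constructor
  · exact min_eq_left (le_max_of_le_right hi)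
  · have h1 : C2 / (C1 + C2) * S3 ≤ S3 - D1 := by linarith
    rw [max_eq_left h1]
    exact min_eq_right (by linarith)
end

section
/- The priority-based merge flux formula q_i = min{D_i, max{S3 − D_j, α_i·S3}}, with α1 + α2 = 1, α_i ∈ [0,1], is invariant: substituting q1, q2 back as demands (i.e., evaluating the formula at demands q1, q2 and supply S3) returns the same values q1, q2. -/
lemma priority_aux (a b D1 D2 S3 : ℝ) :
    min (min D1 (max (S3 - D2) a))
        (max (S3 - min D2 (max (S3 - D1) b)) a)
      = min D1 (max (S3 - D2) a) := by
  set q1 := min D1 (max (S3 - D2) a) with hq1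
  set q2 := min D2 (max (S3 - D1) b) with hq2
  apply min_eq_left
  rcases le_or_gt q1 a with h | h
  · exact le_max_of_le_right h
  · apply le_max_of_le_left
    have h1 : q1 ≤ max (S3 - D2) a := min_le_right _ _
    have h2 : q1 ≤ S3 - D2 := by
      rcases max_cases (S3 - D2) a with ⟨he, _⟩ | ⟨he, hle⟩
      · rw [he] at h1; exact h1
      · rw [he] at h1; linarith
    have h3 : q2 ≤ D2 := min_le_left _ _
    linarith

/-- The priority-based merge flux formula is invariant: plugging the fluxes
back in as demands returns the same fluxes. -/
theorem priority_merge_invariant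
    (α1 α2 D1 D2 S3 : ℝ)
    (hα1 : 0 ≤ α1) (hα2 : 0 ≤ α2) (hα1' : α1 ≤ 1) (hα2' : α2 ≤ 1)
    (hsum : α1 + α2 = 1)
    (hD1 : 0 ≤ D1) (hD2 : 0 ≤ D2) (hS3 : 0 ≤ S3) :
    (min (min D1 (max (S3 - D2) (α1 * S3)))
        (max (S3 - min D2 (max (S3 - D1) (α2 * S3))) (α1 * S3))
      = min D1 (max (S3 - D2) (α1 * S3))) ∧
    (min (min D2 (max (S3 - D1) (α2 * S3)))
        (max (S3 - min D1 (max (S3 - D2) (α1 * S3))) (α2 * S3))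
      = min D2 (max (S3 - D1) (α2 * S3))) := by
  exact ⟨priority_aux _ _ _ _ _, priority_aux _ _ _ _ _⟩
end

section
/- For the priority merge model q_i = min{D_i, max{S3 − D_j, α_i·S3}} with α1 + α2 = 1 and α_i ∈ [0,1], the total flux satisfies q1 + q2 = min{D1 + D2, S3}. -/
set_option maxHeartbeats 1000000


/-- Priority merge: the total flux is `min (D1 + D2) S3`. -/
theorem priority_merge_total_flux
    (α1 α2 D1 D2 S3 : ℝ)
    (hα1 : 0 ≤ α1) (hα2 : 0 ≤ α2) (hα1' : α1 ≤ 1) (hα2' : α2 ≤ 1)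
    (hsum : α1 + α2 = 1)
    (hD1 : 0 ≤ D1) (hD2 : 0 ≤ D2) (hS3 : 0 ≤ S3) :
    min D1 (max (S3 - D2) (α1 * S3)) + min D2 (max (S3 - D1) (α2 * S3))
      = min (D1 + D2) S3 := by
  have hs : α1 * S3 + α2 * S3 = S3 := by nlinarith
  rcases le_total (S3 - D2) (α1 * S3) with h3 | h3 <;>
  rcases le_total (S3 - D1) (α2 * S3) with h4 | h4 <;>
  simp only [max_eq_right h3, max_eq_left h3, max_eq_right h4, max_eq_left h4] <;>
  rcases le_total D1 (α1 * S3) with h1 | h1 <;>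
  rcases le_total D2 (α2 * S3) with h2 | h2 <;>
  rcases le_total D1 (S3 - D2) with h1' | h1' <;>
  rcases le_total D2 (S3 - D1) with h2' | h2' <;>
  rcases le_total (D1 + D2) S3 with h5 | h5 <;>
  simp only [min_eq_left, min_eq_right, min_def, if_pos, if_neg, *]
  all_goals linarith [mul_nonneg hα1 hS3, mul_nonneg hα2 hS3]
end

section
/- For the constant merge model q_i = min{D_i, α_i·C3, max{S3 − D_j, α_i·S3}} with α1 + α2 = 1, α_i ∈ [0,1], 0 ≤ S3 ≤ C3, the total flux satisfies q1 + q2 ≤ min{D1 + D2, S3}, and the inequality can be strict. -/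
/-- Constant merge model: the total flux is at most `min (D1 + D2) S3`,
and the inequality can be strict. -/
theorem constant_merge_suboptimal :
    (∀ α1 α2 D1 D2 S3 C3 : ℝ,
      0 ≤ α1 → 0 ≤ α2 → α1 ≤ 1 → α2 ≤ 1 → α1 + α2 = 1 →
      0 ≤ D1 → 0 ≤ D2 → 0 ≤ S3 → S3 ≤ C3 →
      min (min D1 (α1 * C3)) (max (S3 - D2) (α1 * S3)) +
        min (min D2 (α2 * C3)) (max (S3 - D1) (α2 * S3)) ≤ min (D1 + D2) S3) ∧
    (∃ α1 α2 D1 D2 S3 C3 : ℝ,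
      0 ≤ α1 ∧ 0 ≤ α2 ∧ α1 ≤ 1 ∧ α2 ≤ 1 ∧ α1 + α2 = 1 ∧
      0 ≤ D1 ∧ 0 ≤ D2 ∧ 0 ≤ S3 ∧ S3 ≤ C3 ∧
      min (min D1 (α1 * C3)) (max (S3 - D2) (α1 * S3)) +
        min (min D2 (α2 * C3)) (max (S3 - D1) (α2 * S3)) < min (D1 + D2) S3) := by
  constructor
  · intro α1 α2 D1 D2 S3 C3 h1 h2 h3 h4 h5 hD1 hD2 hS3 hSC
    have hsum : α1 * S3 + α2 * S3 = S3 := by rw [← add_mul, h5, one_mul]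
    rcases le_total (S3 - D2) (α1 * S3) with hA | hA <;>
    rcases le_total (S3 - D1) (α2 * S3) with hB | hB <;>
      simp only [max_eq_right hA, max_eq_left hA, max_eq_right hB, max_eq_left hB] <;>
    · apply le_min <;>
      linarith [min_le_right (min D1 (α1 * C3)) (α1 * S3),
        min_le_right (min D1 (α1 * C3)) (S3 - D2),
        min_le_right (min D2 (α2 * C3)) (α2 * S3),
        min_le_right (min D2 (α2 * C3)) (S3 - D1),
        le_trans (min_le_left (min D1 (α1 * C3)) (α1 * S3)) (min_le_left D1 (α1 * C3)),
        le_trans (min_le_left (min D2 (α2 * C3)) (α2 * S3)) (min_le_left D2 (α2 * C3)),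
        le_trans (min_le_left (min D1 (α1 * C3)) (S3 - D2)) (min_le_left D1 (α1 * C3)),
        le_trans (min_le_left (min D2 (α2 * C3)) (S3 - D1)) (min_le_left D2 (α2 * C3))]
  · exact ⟨1/2, 1/2, 0, 1, 1, 1, by norm_num⟩
end

section
/- If α_i = C_i/(C1+C2) for i = 1, 2, then the priority merge flux formula min{D_i, max{S3 − D_j, α_i·S3}} coincides with the fair merge flux formula min{D_i, max{S3 − D_j, (C_i/(C1+C2))·S3}}; in particular the invariant fair merge model (Ni–Leonard) is invariant. -/
lemma fair_merge_key (D1 D2 a b : ℝ)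
    (hD2 : 0 ≤ D2) (ha : 0 ≤ a) (hb : 0 ≤ b) :
    min (min D1 (max (a + b - D2) a))
        (max (a + b - min D2 (max (a + b - D1) b)) a)
      = min D1 (max (a + b - D2) a) := by
  rcases le_total D2 b with h | h <;>
    simp only [min_def, max_def] <;> split_ifs <;> linarith

/-- With `α_i = C_i/(C1+C2)`, the priority merge formula coincides with the
fair merge formula and is invariant. -/
theorem fair_merge_invariant
    (C1 C2 D1 D2 S3 : ℝ)
    (hC1 : 0 < C1) (hC2 : 0 < C2)
    (hD1 : 0 ≤ D1) (hD2 : 0 ≤ D2) (hS3 : 0 ≤ S3) :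
    (min (min D1 (max (S3 - D2) (C1 / (C1 + C2) * S3)))
        (max (S3 - min D2 (max (S3 - D1) (C2 / (C1 + C2) * S3)))
          (C1 / (C1 + C2) * S3))
      = min D1 (max (S3 - D2) (C1 / (C1 + C2) * S3))) ∧
    (min (min D2 (max (S3 - D1) (C2 / (C1 + C2) * S3)))
        (max (S3 - min D1 (max (S3 - D2) (C1 / (C1 + C2) * S3)))
          (C2 / (C1 + C2) * S3))
      = min D2 (max (S3 - D1) (C2 / (C1 + C2) * S3))) := by
  have hC : 0 < C1 + C2 := by linarith
  set a := C1 / (C1 + C2) * S3 with ha'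
  set b := C2 / (C1 + C2) * S3 with hb'
  have ha : 0 ≤ a := by positivity
  have hb : 0 ≤ b := by positivity
  have hab : a + b = S3 := by
    rw [ha', hb']; field_simp
  constructor
  · have := fair_merge_key D1 D2 a b hD2 ha hb
    rw [hab] at this; exact this
  · have := fair_merge_key D2 D1 b a hD1 hb ha
    rw [add_comm, hab] at this; exact this
end

section
/- In the suboptimal invariant merge model with a metered on-ramp: if D1 > α1·C3, D2 < α2·C3, and S3 = C3, then the total flux is α1·C3 + D2 < C3 = min{D1 + D2, S3} whenever D1 + D2 ≥ C3; i.e., capacity is strictly underutilized. -/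
/-- Suboptimal invariant merge model with a metered on-ramp: if `D1 > α1·C3`,
`D2 < α2·C3`, `S3 = C3` and `D1 + D2 ≥ C3`, then the total flux equals
`α1·C3 + D2`, which is strictly below `min (D1 + D2) S3 = C3`. -/
theorem suboptimal_merge_underutilization
    (α1 α2 C3 D1 D2 : ℝ)
    (hα1 : 0 < α1) (hα2 : 0 < α2) (hα1' : α1 < 1) (hα2' : α2 < 1)
    (hsum : α1 + α2 = 1) (hC3 : 0 < C3)
    (hD1 : 0 ≤ D1) (hD2 : 0 ≤ D2)
    (h1 : α1 * C3 < D1) (h2 : D2 < α2 * C3) (h3 : C3 ≤ D1 + D2) :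
    min (min D1 (α1 * C3)) (max (C3 - D2) (α1 * C3)) +
      min (min D2 (α2 * C3)) (max (C3 - D1) (α2 * C3)) = α1 * C3 + D2 ∧
    α1 * C3 + D2 < min (D1 + D2) C3 := by
  constructor
  · rw [min_eq_right h1.le, max_eq_left (by nlinarith), min_eq_left (by nlinarith),
      min_eq_left h2.le, max_eq_right (by nlinarith), min_eq_left h2.le]
  · exact lt_min (by nlinarith) (by nlinarith)
end

section
/- If the initial states of a fair merge network satisfy min{D_i, S_i} = min{D_i, max{S3 − D_j, (C_i/(C1+C2))·S3}} for i = 1,2 and min{D3, S3} = min{D1 + D2, S3}, then the stationary states coincide with the initial states and no kinematic waves emerge (traffic dynamics are stationary). -/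
open Classical in
/-- If the initial states of a fair merge network already satisfy the
fair-merge flux relations, then the stationary states (uniquely determined
from the fluxes) coincide with the initial states: traffic is stationary. -/
theorem fair_merge_stationary_initial
    (C1 C2 C3 D1 S1 D2 S2 D3 S3 : ℝ)
    (hC1 : 0 < C1) (hC2 : 0 < C2) (hC3 : 0 < C3)
    (hD1 : 0 ≤ D1) (hS1 : 0 ≤ S1) (hD2 : 0 ≤ D2) (hS2 : 0 ≤ S2)
    (hD3 : 0 ≤ D3) (hS3 : 0 ≤ S3)
    (h1 : max D1 S1 = C1) (h2 : max D2 S2 = C2) (h3 : max D3 S3 = C3)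
    (hq1 : min D1 S1 = min D1 (max (S3 - D2) (C1 / (C1 + C2) * S3)))
    (hq2 : min D2 S2 = min D2 (max (S3 - D1) (C2 / (C1 + C2) * S3)))
    (hq3 : min D3 S3 = min (D1 + D2) S3) :
    (if min D1 (max (S3 - D2) (C1 / (C1 + C2) * S3)) < D1
      then ((C1, min D1 (max (S3 - D2) (C1 / (C1 + C2) * S3))) : ℝ × ℝ)
      else (D1, C1)) = (D1, S1) ∧
    (if min D2 (max (S3 - D1) (C2 / (C1 + C2) * S3)) < D2
      then ((C2, min D2 (max (S3 - D1) (C2 / (C1 + C2) * S3))) : ℝ × ℝ)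
      else (D2, C2)) = (D2, S2) ∧
    (if min (D1 + D2) S3 < S3
      then ((min (D1 + D2) S3, C3) : ℝ × ℝ)
      else (C3, S3)) = (D3, S3) := by
  refine ⟨?_, ?_, ?_⟩
  · split_ifs with h
    · have hs : S1 < D1 := by
        by_contra hle
        push_neg at hle
        rw [min_eq_left hle] at hq1
        exact absurd h (not_lt.mpr hq1.le)
      rw [min_eq_right hs.le] at hq1
      rw [max_eq_left hs.le] at h1
      exact Prod.ext h1.symm hq1.symm
    · push_neg at h
      have hq := hq1.trans (le_antisymm (min_le_left _ _) h)
      have hd : D1 ≤ S1 := min_eq_left_iff.mp hq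
      rw [max_eq_right hd] at h1
      exact Prod.ext rfl h1.symm
  · split_ifs with h
    · have hs : S2 < D2 := by
        by_contra hle
        push_neg at hle
        rw [min_eq_left hle] at hq2
        exact absurd h (not_lt.mpr hq2.le)
      rw [min_eq_right hs.le] at hq2
      rw [max_eq_left hs.le] at h2
      exact Prod.ext h2.symm hq2.symm
    · push_neg at h
      have hq := hq2.trans (le_antisymm (min_le_left _ _) h)
      have hd : D2 ≤ S2 := min_eq_left_iff.mp hq
      rw [max_eq_right hd] at h2
      exact Prod.ext rfl h2.symm
  · split_ifs with h
    · have hd : D3 < S3 := by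
        by_contra hle
        push_neg at hle
        rw [min_eq_right hle] at hq3
        exact absurd h (not_lt.mpr hq3.le)
      rw [min_eq_left hd.le] at hq3
      rw [max_eq_right hd.le] at h3
      exact Prod.ext hq3.symm h3.symm
    · push_neg at h
      have hq := hq3.trans (le_antisymm (min_le_right _ _) h)
      have hs : S3 ≤ D3 := min_eq_right_iff.mp hq
      rw [max_eq_left hs] at h3
      exact Prod.ext h3.symm rfl
end

section
/- For the constant merge model, if D1 + D2 ≥ S3 and S3 − α_j·C3 ≤ D_i ≤ α_i·S3 (with {i,j} = {1,2}), then q_i = D_i, q_j = S3 − D_i, and q1 + q2 = S3, where q_k = min{D_k, α_k·C3, max{S3 − D_l, α_k·S3}}. -/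
/-- Constant merge: if `D1 + D2 ≥ S3` and `S3 - α2·C3 ≤ D1 ≤ α1·S3`, then
`q1 = D1`, `q2 = S3 - D1`, and the total flux is `S3`. -/
theorem constant_merge_intermediate_case
    (α1 α2 D1 D2 S3 C3 : ℝ)
    (hα1 : 0 ≤ α1) (hα2 : 0 ≤ α2) (hα1' : α1 ≤ 1) (hα2' : α2 ≤ 1)
    (hsum : α1 + α2 = 1)
    (hD1 : 0 ≤ D1) (hD2 : 0 ≤ D2) (hS3 : 0 ≤ S3) (hS3C : S3 ≤ C3)
    (h : S3 ≤ D1 + D2) (hlo : S3 - α2 * C3 ≤ D1) (hhi : D1 ≤ α1 * S3) :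
    min (min D1 (α1 * C3)) (max (S3 - D2) (α1 * S3)) = D1 ∧
    min (min D2 (α2 * C3)) (max (S3 - D1) (α2 * S3)) = S3 - D1 ∧
    min (min D1 (α1 * C3)) (max (S3 - D2) (α1 * S3)) +
      min (min D2 (α2 * C3)) (max (S3 - D1) (α2 * S3)) = S3 := by
  have hC : 0 ≤ C3 := le_trans hS3 hS3C
  have h1 : D1 ≤ α1 * C3 := le_trans hhi (by nlinarith)
  have hq1 : min (min D1 (α1 * C3)) (max (S3 - D2) (α1 * S3)) = D1 := by
    rw [min_eq_left h1, min_eq_left (le_max_of_le_right hhi)]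
  have hmax : max (S3 - D1) (α2 * S3) = S3 - D1 := max_eq_left (by nlinarith)
  have hq2 : min (min D2 (α2 * C3)) (max (S3 - D1) (α2 * S3)) = S3 - D1 := by
    rw [hmax]
    exact min_eq_right (le_min (by linarith) (by linarith))
  exact ⟨hq1, hq2, by rw [hq1, hq2]; ring⟩
end
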